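/- The algebra B_0(m,k) is generated as an F_2-algebra by the idempotents I_x, the right-shift elements R_i, the left-shift elements L_i, and the central elements U_i (i = 1,...,m): every weight-homogeneous element φ^{x,y}(p) (p a monomial in the U's) is a product of such generators. -/
import Mathlib


/-- Idempotent states: `k`-element subsets of `{0,1,...,m}`. -/
abbrev IdemState (m k : ℕ) := {x : Finset (Fin (m + 1)) // x.card = k}

/-- The weight `v^x` at coordinate `c : Fin m`, representing the paper's
`v^x_{c+1} = #{a ∈ x : a ≥ c+1}` (coordinate `c` corresponds to the strand
labelled `c+1`). -/
def vwt {m : ℕ} (x : Finset (Fin (m + 1))) (c : Fin m) : ℕ :=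
  (x.filter (fun a => (c : ℕ) < a.val)).card

/-- Twice the minimal relative weight: `2·w^{x,y}_{c+1} = |v^x_{c+1} − v^y_{c+1}|`. -/
def wnum {m : ℕ} (x y : Finset (Fin (m + 1))) (c : Fin m) : ℕ :=
  ((vwt x c : ℤ) - (vwt y c : ℤ)).natAbs

/-- Basis elements of `B₀(m,k)`: a pair of idempotent states together with a
monomial `U_1^{s_1} ⋯ U_m^{s_m}` (recorded by its exponents); the basis element
is `φ^{x,y}(U^s)`. -/
structure BGen (m k : ℕ) where
  l : IdemState m k
  r : IdemState m k
  s : Fin m → ℕ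
deriving DecidableEq

/-- The exponents `t_i = w^{x,y}_i + w^{y,z}_i − w^{x,z}_i` of the correction
monomial `g^{x,y,z} = U_1^{t_1} ⋯ U_m^{t_m}`. -/
def texp {m k : ℕ} (x y z : IdemState m k) (c : Fin m) : ℕ :=
  (wnum x.1 y.1 c + wnum y.1 z.1 c - wnum x.1 z.1 c) / 2

/-- The product of two basis elements of `B₀(m,k)`:
`φ^{x,y}(U^s) * φ^{y',z}(U^{s'})` is zero (i.e. `none`) unless `y = y'`, in
which case it equals `φ^{x,z}(U^s · U^{s'} · g^{x,y,z})`. -/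
def mulBGen {m k : ℕ} (a b : BGen m k) : Option (BGen m k) :=
  if a.r = b.l then
    some ⟨a.l, b.r, fun c => a.s c + b.s c + texp a.l a.r b.r c⟩
  else none

/-- A basic idempotent `I_x = φ^{x,x}(1)`. -/
def IsIdemGen {m k : ℕ} (g : BGen m k) : Prop :=
  g.l = g.r ∧ g.s = fun _ => 0

/-- An element `U_i` (in the summand `I_x·B₀·I_x`, i.e. `φ^{x,x}(U_i)`). -/
def IsUGen {m k : ℕ} (g : BGen m k) : Prop :=
  g.l = g.r ∧ ∃ i : Fin m, g.s = fun c => if c = i then 1 else 0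

/-- A right-shift `R_j^x = φ^{x,y}(1)` with `y = (x ∪ {j}) \ {j−1}` (here the
shift at position `j = i+1` moves the coordinate `i` to `i+1`). -/
def IsRGen {m k : ℕ} (g : BGen m k) : Prop :=
  (∃ i : Fin m, i.castSucc ∈ g.l.1 ∧ i.succ ∉ g.l.1 ∧
    g.r.1 = insert i.succ (g.l.1.erase i.castSucc)) ∧ g.s = fun _ => 0

/-- A left-shift `L_j^y = φ^{y,x}(1)` with `x = (y ∪ {j−1}) \ {j}`. -/
def IsLGen {m k : ℕ} (g : BGen m k) : Prop :=
  (∃ i : Fin m, i.succ ∈ g.l.1 ∧ i.castSucc ∉ g.l.1 ∧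
    g.r.1 = insert i.castSucc (g.l.1.erase i.succ)) ∧ g.s = fun _ => 0

/-- The generators of `B₀(m,k)`: idempotents, `U_i`'s, `R_i`'s and `L_i`'s. -/
def IsGenerator {m k : ℕ} (g : BGen m k) : Prop :=
  IsIdemGen g ∨ IsUGen g ∨ IsRGen g ∨ IsLGen g

/-- The product of a list of basis elements (zero, i.e. `none`, if some
intermediate product vanishes; `none` for the empty list). -/
def listProd {m k : ℕ} : List (BGen m k) → Option (BGen m k)
  | [] => none
  | [a] => some a
  | a :: b :: rest => (listProd (b :: rest)).bind fun p => mulBGen a p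
namespace B0aux
variable {m k : ℕ}

/-- Extended weight: number of elements of `x` with value `≥ n`. -/
def Wf (x : Finset (Fin (m+1))) (n : ℕ) : ℕ := (x.filter fun a => n ≤ a.val).card

lemma vwt_eq_Wf (x : Finset (Fin (m+1))) (c : Fin m) : vwt x c = Wf x (c.val+1) := rfl

lemma Wf_zero (x : Finset (Fin (m+1))) : Wf x 0 = x.card := by simp [Wf]

lemma Wf_large (x : Finset (Fin (m+1))) {n : ℕ} (h : m+1 ≤ n) : Wf x n = 0 := by
  rw [Wf, Finset.card_eq_zero, Finset.filter_eq_empty_iff]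
  intro a _
  have := a.isLt
  omega

lemma Wf_antitone (x : Finset (Fin (m+1))) {p q : ℕ} (h : p ≤ q) : Wf x q ≤ Wf x p := by
  apply Finset.card_le_card
  intro a ha
  simp only [Finset.mem_filter] at ha ⊢
  exact ⟨ha.1, le_trans h ha.2⟩

lemma Wf_step (x : Finset (Fin (m+1))) (n : ℕ) (b : Fin (m+1)) (hb : b.val = n) :
    Wf x n = Wf x (n+1) + (if b ∈ x then 1 else 0) := by
  have hsplit : x.filter (fun a => n ≤ a.val)
      = x.filter (fun a => n+1 ≤ a.val) ∪ x.filter (fun a => a = b) := by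
    ext a
    simp only [Finset.mem_filter, Finset.mem_union]
    constructor
    · rintro ⟨ha, hn⟩
      rcases eq_or_ne a b with h | h
      · exact Or.inr ⟨ha, h⟩
      · refine Or.inl ⟨ha, ?_⟩
        have : a.val ≠ n := fun hv => h (Fin.ext (hv.trans hb.symm))
        omega
    · rintro (⟨ha, hn⟩ | ⟨ha, rfl⟩)
      · exact ⟨ha, by omega⟩
      · exact ⟨ha, by omega⟩
  have hdisj : Disjoint (x.filter (fun a => n+1 ≤ a.val)) (x.filter (fun a => a = b)) := by
    rw [Finset.disjoint_left]
    intro a ha hb'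
    simp only [Finset.mem_filter] at ha hb'
    rcases hb' with ⟨_, rfl⟩
    omega
  rw [Wf, hsplit, Finset.card_union_of_disjoint hdisj]
  congr 1
  rw [Finset.filter_eq']
  split <;> simp

lemma Wf_const (x : Finset (Fin (m+1))) {p q : ℕ} (hpq : p ≤ q)
    (h : ∀ a ∈ x, a.val < p ∨ q ≤ a.val) : Wf x p = Wf x q := by
  unfold Wf
  congr 1
  apply Finset.filter_congr
  intro a ha
  have := h a ha
  constructor <;> (intro; omega)

lemma eq_of_vwt_eq {x z : Finset (Fin (m+1))} (hc : x.card = z.card)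
    (h : ∀ c : Fin m, vwt x c = vwt z c) : x = z := by
  have hW : ∀ n : ℕ, Wf x n = Wf z n := by
    intro n
    rcases Nat.eq_zero_or_pos n with rfl | hn
    · rw [Wf_zero, Wf_zero, hc]
    · rcases le_or_gt n m with hnm | hnm
      · have : n - 1 < m := by omega
        have := h ⟨n-1, this⟩
        rw [vwt_eq_Wf, vwt_eq_Wf] at this
        simpa [Nat.sub_add_cancel hn] using this
      · rw [Wf_large x (by omega), Wf_large z (by omega)]
  ext a
  have hx := Wf_step x a.val a rfl
  have hz := Wf_step z a.val a rfl
  rw [hW a.val, hW (a.val+1)] at hx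
  rw [hx] at hz
  constructor <;> intro hm
  · by_contra hm2
    rw [if_pos hm, if_neg hm2] at hz; omega
  · by_contra hm2
    rw [if_neg hm2, if_pos hm] at hz; omega

end B0aux
namespace B0aux
variable {m k : ℕ}

lemma exists_R {x z : Finset (Fin (m+1))} (hc : x.card = z.card)
    {i0 : Fin m} (h0 : vwt x i0 < vwt z i0) :
    ∃ i : Fin m, i.castSucc ∈ x ∧ i.succ ∉ x ∧ vwt x i < vwt z i := by
  classical
  set T : Finset (Fin m) := Finset.univ.filter (fun j => Wf x (j.val+1) < Wf z (j.val+1)) with hT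
  have hTne : T.Nonempty := ⟨i0, by simp [hT]; rwa [vwt_eq_Wf, vwt_eq_Wf] at h0⟩
  set i1 := T.max' hTne with hi1
  have hi1T : i1 ∈ T := T.max'_mem hTne
  have h1 : Wf x (i1.val+1) < Wf z (i1.val+1) := by simpa [hT] using hi1T
  have h2 : Wf z (i1.val+1+1) ≤ Wf x (i1.val+1+1) := by
    by_cases hlt : i1.val + 1 < m
    · have hnot : (⟨i1.val+1, hlt⟩ : Fin m) ∉ T := by
        intro hmem
        have := T.le_max' _ hmem
        rw [← hi1] at this
        have : i1.val + 1 ≤ i1.val := this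
        omega
      simp only [hT, Finset.mem_filter, Finset.mem_univ, true_and, not_lt] at hnot
      exact hnot
    · have hm1 : i1.val + 1 = m := by have := i1.isLt; omega
      rw [Wf_large x (by omega), Wf_large z (by omega)]
  -- i1.succ ∉ x
  have hsx := Wf_step x (i1.val+1) i1.succ (by simp)
  have hsz := Wf_step z (i1.val+1) i1.succ (by simp)
  have hsucc1 : i1.succ ∉ x := by
    intro hmem
    rw [if_pos hmem] at hsx
    by_cases hz2 : i1.succ ∈ z
    · rw [if_pos hz2] at hsz; omega
    · rw [if_neg hz2] at hsz; omega
  -- phase 2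
  have hk1 : Wf x (i1.val+1) < x.card := by
    have := Wf_antitone z (Nat.zero_le (i1.val+1))
    rw [Wf_zero] at this
    omega
  set E : Finset (Fin (m+1)) := x.filter (fun a => a.val ≤ i1.val) with hE
  have hEne : E.Nonempty := by
    by_contra hemp
    rw [Finset.not_nonempty_iff_eq_empty, Finset.filter_eq_empty_iff] at hemp
    have : Wf x (i1.val+1) = x.card := by
      rw [Wf, Finset.filter_true_of_mem]
      intro a ha
      have := hemp ha
      omega
    omega
  set a1 := E.max' hEne with ha1
  have ha1E : a1 ∈ E := E.max'_mem hEne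
  have ha1x : a1 ∈ x := (Finset.mem_filter.mp ha1E).1
  have ha1le : a1.val ≤ i1.val := by
    have := (Finset.mem_filter.mp ha1E).2
    exact this
  have ham : a1.val < m := by have := i1.isLt; omega
  refine ⟨⟨a1.val, ham⟩, ?_, ?_, ?_⟩
  · have : (⟨a1.val, ham⟩ : Fin m).castSucc = a1 := Fin.ext rfl
    rwa [this]
  · intro hmem
    have hval : ((⟨a1.val, ham⟩ : Fin m).succ).val = a1.val + 1 := rfl
    by_cases hcase : a1.val + 1 ≤ i1.val
    · have : (⟨a1.val, ham⟩ : Fin m).succ ∈ E := by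
        rw [hE, Finset.mem_filter]
        exact ⟨hmem, by rw [hval]; exact hcase⟩
      have := E.le_max' _ this
      rw [← ha1] at this
      have h' : a1.val + 1 ≤ a1.val := by
        have := Fin.le_iff_val_le_val.mp this
        rw [hval] at this
        exact this
      omega
    · have heq : a1.val = i1.val := by omega
      apply hsucc1
      have : (⟨a1.val, ham⟩ : Fin m).succ = i1.succ := Fin.ext (by rw [hval]; simp [heq])
      rwa [this] at hmem
  · show Wf x (a1.val+1) < Wf z (a1.val+1)
    have hconst : Wf x (a1.val+1) = Wf x (i1.val+1) := by
      apply Wf_const x (by omega)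
      intro a ha
      by_cases hle : a.val ≤ i1.val
      · left
        have : a ∈ E := Finset.mem_filter.mpr ⟨ha, hle⟩
        have := E.le_max' _ this
        rw [← ha1] at this
        have := Fin.le_iff_val_le_val.mp this
        omega
      · right; omega
    have hmono := Wf_antitone z (show a1.val+1 ≤ i1.val+1 by omega)
    omega

lemma exists_L {x z : Finset (Fin (m+1))} (hc : x.card = z.card)
    {i0 : Fin m} (h0 : vwt z i0 < vwt x i0) :
    ∃ i : Fin m, i.succ ∈ x ∧ i.castSucc ∉ x ∧ vwt z i < vwt x i := by
  classical
  set T : Finset (Fin m) := Finset.univ.filter (fun j => Wf z (j.val+1) < Wf x (j.val+1)) with hT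
  have hTne : T.Nonempty := ⟨i0, by simp [hT]; rwa [vwt_eq_Wf, vwt_eq_Wf] at h0⟩
  set i1 := T.min' hTne with hi1
  have hi1T : i1 ∈ T := T.min'_mem hTne
  have h1 : Wf z (i1.val+1) < Wf x (i1.val+1) := by simpa [hT] using hi1T
  have h2 : Wf x i1.val ≤ Wf z i1.val := by
    rcases Nat.eq_zero_or_pos i1.val with h0' | h0'
    · rw [h0', Wf_zero, Wf_zero, hc]
    · have hlt : i1.val - 1 < m := by have := i1.isLt; omega
      have hnot : (⟨i1.val-1, hlt⟩ : Fin m) ∉ T := by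
        intro hmem
        have := T.min'_le _ hmem
        rw [← hi1] at this
        have : i1.val ≤ i1.val - 1 := this
        omega
      simp only [hT, Finset.mem_filter, Finset.mem_univ, true_and, not_lt] at hnot
      have : i1.val - 1 + 1 = i1.val := by omega
      rwa [this] at hnot
  -- i1.castSucc ∉ x
  have hsx := Wf_step x i1.val i1.castSucc (by simp)
  have hsz := Wf_step z i1.val i1.castSucc (by simp)
  have hcs1 : i1.castSucc ∉ x := by
    intro hmem
    rw [if_pos hmem] at hsx
    by_cases hz2 : i1.castSucc ∈ z
    · rw [if_pos hz2] at hsz; omega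
    · rw [if_neg hz2] at hsz; omega
  -- phase 2
  set E : Finset (Fin (m+1)) := x.filter (fun a => i1.val+1 ≤ a.val) with hE
  have hEcard : E.card = Wf x (i1.val+1) := rfl
  have hEne : E.Nonempty := by
    rw [← Finset.card_pos, hEcard]; omega
  set a1 := E.min' hEne with ha1
  have ha1E : a1 ∈ E := E.min'_mem hEne
  have ha1x : a1 ∈ x := (Finset.mem_filter.mp ha1E).1
  have ha1ge : i1.val + 1 ≤ a1.val := (Finset.mem_filter.mp ha1E).2
  have ha1m : a1.val - 1 < m := by have := a1.isLt; omega
  refine ⟨⟨a1.val - 1, ha1m⟩, ?_, ?_, ?_⟩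
  · have : (⟨a1.val - 1, ha1m⟩ : Fin m).succ = a1 := Fin.ext (by simp; omega)
    rwa [this]
  · intro hmem
    have hval : ((⟨a1.val - 1, ha1m⟩ : Fin m).castSucc).val = a1.val - 1 := rfl
    by_cases hcase : i1.val + 1 ≤ a1.val - 1
    · have : (⟨a1.val - 1, ha1m⟩ : Fin m).castSucc ∈ E := by
        rw [hE, Finset.mem_filter]
        exact ⟨hmem, by rw [hval]; exact hcase⟩
      have := E.min'_le _ this
      rw [← ha1] at this
      have h' := Fin.le_iff_val_le_val.mp this
      rw [hval] at h'
      omega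
    · have heq : a1.val - 1 = i1.val := by omega
      apply hcs1
      have : (⟨a1.val - 1, ha1m⟩ : Fin m).castSucc = i1.castSucc := Fin.ext (by rw [hval, heq]; rfl)
      rwa [this] at hmem
  · show Wf z (a1.val-1+1) < Wf x (a1.val-1+1)
    have hv : a1.val - 1 + 1 = a1.val := by omega
    rw [hv]
    have hconst : Wf x (i1.val+1) = Wf x a1.val := by
      apply Wf_const x (by omega)
      intro a ha
      by_cases hle : i1.val + 1 ≤ a.val
      · right
        have : a ∈ E := Finset.mem_filter.mpr ⟨ha, hle⟩
        have := E.min'_le _ this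
        rw [← ha1] at this
        exact Fin.le_iff_val_le_val.mp this
      · left; omega
    have hmono := Wf_antitone z (show i1.val+1 ≤ a1.val by omega)
    omega

end B0aux
namespace B0aux
variable {m k : ℕ}

lemma card_move (x : Finset (Fin (m+1))) {a b : Fin (m+1)} (ha : a ∈ x) (hb : b ∉ x) :
    (insert b (x.erase a)).card = x.card := by
  rw [Finset.card_insert_of_notMem (fun h => hb (Finset.mem_of_mem_erase h)),
    Finset.card_erase_add_one ha]

lemma vwt_move (x : Finset (Fin (m+1))) {a b : Fin (m+1)} (ha : a ∈ x) (hb : b ∉ x)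
    (c : Fin m) :
    vwt (insert b (x.erase a)) c + (if (c : ℕ) < a.val then 1 else 0)
      = vwt x c + (if (c : ℕ) < b.val then 1 else 0) := by
  classical
  unfold vwt
  rw [Finset.filter_insert, Finset.filter_erase]
  set F := x.filter (fun a' => (c : ℕ) < a'.val) with hF
  have hbF : b ∉ F.erase a :=
    fun h => hb (Finset.mem_of_mem_filter _ (Finset.mem_of_mem_erase h))
  have hbF' : b ∉ F := fun h => hb (Finset.mem_of_mem_filter _ h)
  by_cases hPa : (c : ℕ) < a.val
  · have haF : a ∈ F := Finset.mem_filter.mpr ⟨ha, hPa⟩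
    have hcard := Finset.card_erase_add_one haF
    by_cases hPb : (c : ℕ) < b.val
    · rw [if_pos hPb, if_pos hPa, if_pos hPb, Finset.card_insert_of_notMem hbF]
      omega
    · rw [if_neg hPb, if_pos hPa, if_neg hPb]
      omega
  · have haF : a ∉ F := fun h => hPa (Finset.mem_filter.mp h).2
    rw [Finset.erase_eq_of_notMem haF]
    by_cases hPb : (c : ℕ) < b.val
    · rw [if_pos hPb, if_neg hPa, if_pos hPb, Finset.card_insert_of_notMem hbF']
    · rw [if_neg hPb, if_neg hPa, if_neg hPb]

lemma vwt_R {x : Finset (Fin (m+1))} {i : Fin m} (h1 : i.castSucc ∈ x) (h2 : i.succ ∉ x)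
    (c : Fin m) :
    vwt (insert i.succ (x.erase i.castSucc)) c = vwt x c + (if c = i then 1 else 0) := by
  have h := vwt_move x h1 h2 c
  have hcs : (i.castSucc).val = i.val := rfl
  have hs : (i.succ).val = i.val + 1 := rfl
  rw [hcs, hs] at h
  rcases eq_or_ne c i with rfl | hne
  · rw [if_neg (lt_irrefl _), if_pos (Nat.lt_succ_self _)] at h
    rw [if_pos rfl]
    omega
  · have hv : (c : ℕ) ≠ i.val := fun hh => hne (Fin.ext hh)
    rw [if_neg hne]
    split_ifs at h <;> omega

lemma vwt_L {x : Finset (Fin (m+1))} {i : Fin m} (h1 : i.succ ∈ x) (h2 : i.castSucc ∉ x)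
    (c : Fin m) :
    vwt (insert i.castSucc (x.erase i.succ)) c + (if c = i then 1 else 0) = vwt x c := by
  have h := vwt_move x h1 h2 c
  have hcs : (i.castSucc).val = i.val := rfl
  have hs : (i.succ).val = i.val + 1 := rfl
  rw [hcs, hs] at h
  rcases eq_or_ne c i with rfl | hne
  · rw [if_neg (lt_irrefl _), if_pos (Nat.lt_succ_self _)] at h
    rw [if_pos rfl]
    omega
  · have hv : (c : ℕ) ≠ i.val := fun hh => hne (Fin.ext hh)
    rw [if_neg hne]
    split_ifs at h <;> omega

lemma texp_self {x z : IdemState m k} (c : Fin m) : texp x x z c = 0 := by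
  unfold texp wnum
  omega

lemma texp_R {x y z : IdemState m k} {i : Fin m}
    (hy : ∀ c, vwt y.1 c = vwt x.1 c + (if c = i then 1 else 0))
    (hlt : vwt x.1 i < vwt z.1 i) (c : Fin m) : texp x y z c = 0 := by
  have h := hy c
  unfold texp wnum
  rcases eq_or_ne c i with rfl | hne
  · rw [if_pos rfl] at h
    omega
  · rw [if_neg hne] at h
    omega

lemma texp_L {x y z : IdemState m k} {i : Fin m}
    (hy : ∀ c, vwt y.1 c + (if c = i then 1 else 0) = vwt x.1 c)
    (hlt : vwt z.1 i < vwt x.1 i) (c : Fin m) : texp x y z c = 0 := by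
  have h := hy c
  unfold texp wnum
  rcases eq_or_ne c i with rfl | hne
  · rw [if_pos rfl] at h
    omega
  · rw [if_neg hne] at h
    omega

lemma wnum_R_lt {x y z : Finset (Fin (m+1))} {i : Fin m}
    (hy : ∀ c, vwt y c = vwt x c + (if c = i then 1 else 0))
    (hlt : vwt x i < vwt z i) :
    (∑ c : Fin m, wnum y z c) < ∑ c : Fin m, wnum x z c := by
  apply Finset.sum_lt_sum
  · intro c _
    have h := hy c
    unfold wnum
    rcases eq_or_ne c i with rfl | hne
    · rw [if_pos rfl] at h; omega
    · rw [if_neg hne] at h; omega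
  · refine ⟨i, Finset.mem_univ i, ?_⟩
    have h := hy i
    rw [if_pos rfl] at h
    unfold wnum
    omega

lemma wnum_L_lt {x y z : Finset (Fin (m+1))} {i : Fin m}
    (hy : ∀ c, vwt y c + (if c = i then 1 else 0) = vwt x c)
    (hlt : vwt z i < vwt x i) :
    (∑ c : Fin m, wnum y z c) < ∑ c : Fin m, wnum x z c := by
  apply Finset.sum_lt_sum
  · intro c _
    have h := hy c
    unfold wnum
    rcases eq_or_ne c i with rfl | hne
    · rw [if_pos rfl] at h; omega
    · rw [if_neg hne] at h; omega
  · refine ⟨i, Finset.mem_univ i, ?_⟩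
    have h := hy i
    rw [if_pos rfl] at h
    unfold wnum
    omega

lemma bgen_ext {a b : BGen m k} (h1 : a.l = b.l) (h2 : a.r = b.r) (h3 : a.s = b.s) :
    a = b := by
  cases a; cases b
  simp only at h1 h2 h3
  subst h1; subst h2; subst h3
  rfl

lemma listProd_cons (a : BGen m k) {l : List (BGen m k)} {p : BGen m k}
    (h : listProd l = some p) : listProd (a :: l) = mulBGen a p := by
  cases l with
  | nil => simp [listProd] at h
  | cons b rest =>
    show (listProd (b :: rest)).bind (fun q => mulBGen a q) = mulBGen a p
    rw [h]
    rfl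

end B0aux
open B0aux
/-- The algebra `B₀(m,k)` is generated over `F₂` by the
idempotents `I_x`, the right-shifts `R_i`, the left-shifts `L_i` and the
(central) elements `U_i`: every weight-homogeneous element `φ^{x,y}(p)` (`p` a
monomial in the `U`'s, i.e. every basis element) is a product of such
generators. -/
theorem B0_generated_by_shifts (m k : ℕ) (hk : k ≤ m + 1) (g : BGen m k) :
    ∃ l : List (BGen m k), (∀ h ∈ l, IsGenerator h) ∧ listProd l = some g := by
  classical
  suffices H : ∀ N : ℕ, ∀ g : BGen m k,
      (∑ c : Fin m, wnum g.l.1 g.r.1 c) + (∑ c : Fin m, g.s c) ≤ N →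
      ∃ l : List (BGen m k), (∀ h ∈ l, IsGenerator h) ∧ listProd l = some g from
    H _ g le_rfl
  intro N
  induction N using Nat.strong_induction_on with
  | _ N ih =>
  intro g hg
  by_cases hxz : g.l = g.r
  · by_cases hs : ∀ c, g.s c = 0
    · refine ⟨[g], ?_, rfl⟩
      intro h hh
      simp only [List.mem_singleton] at hh
      subst hh
      exact Or.inl ⟨hxz, funext hs⟩
    · push_neg at hs
      obtain ⟨i, hi⟩ := hs
      have hslt : (∑ c : Fin m, (g.s c - if c = i then 1 else 0)) < ∑ c : Fin m, g.s c := by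
        apply Finset.sum_lt_sum
        · intro c _
          split_ifs <;> omega
        · refine ⟨i, Finset.mem_univ i, ?_⟩
          rw [if_pos rfl]
          omega
      obtain ⟨l', hgen', hprod'⟩ := ih
        ((∑ c : Fin m, wnum g.l.1 g.r.1 c) + ∑ c : Fin m, (g.s c - if c = i then 1 else 0))
        (by omega) ⟨g.l, g.r, fun c => g.s c - if c = i then 1 else 0⟩ le_rfl
      refine ⟨⟨g.l, g.l, fun c => if c = i then 1 else 0⟩ :: l', ?_, ?_⟩
      · intro h hh
        rcases List.mem_cons.mp hh with rfl | hh
        · exact Or.inr (Or.inl ⟨rfl, i, rfl⟩)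
        · exact hgen' h hh
      · rw [listProd_cons _ hprod']
        simp only [mulBGen]
        rw [if_pos trivial]
        congr 1
        refine bgen_ext rfl rfl (funext fun c => ?_)
        simp only
        rw [texp_self]
        rcases eq_or_ne c i with rfl | hne
        · rw [if_pos rfl]; omega
        · rw [if_neg hne]; omega
  · have hcards : g.l.1.card = g.r.1.card := by rw [g.l.2, g.r.2]
    have hne : ∃ c : Fin m, vwt g.l.1 c ≠ vwt g.r.1 c := by
      by_contra hcon
      push_neg at hcon
      exact hxz (Subtype.ext (eq_of_vwt_eq hcards hcon))
    obtain ⟨c0, hc0⟩ := hne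
    rcases Nat.lt_or_ge (vwt g.l.1 c0) (vwt g.r.1 c0) with h0 | h0
    · -- R case
      obtain ⟨i, hi1, hi2, hi3⟩ := exists_R hcards h0
      have hyc : (insert i.succ (g.l.1.erase i.castSucc)).card = k := by
        rw [card_move _ hi1 hi2, g.l.2]
      have hvy : ∀ c, vwt (⟨insert i.succ (g.l.1.erase i.castSucc), hyc⟩ : IdemState m k).1 c
          = vwt g.l.1 c + (if c = i then 1 else 0) := vwt_R hi1 hi2
      have hwlt := wnum_R_lt hvy hi3
      obtain ⟨l', hgen', hprod'⟩ := ih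
        ((∑ c : Fin m, wnum (⟨insert i.succ (g.l.1.erase i.castSucc), hyc⟩ : IdemState m k).1 g.r.1 c)
          + ∑ c : Fin m, g.s c)
        (by omega) ⟨⟨insert i.succ (g.l.1.erase i.castSucc), hyc⟩, g.r, g.s⟩ le_rfl
      refine ⟨⟨g.l, ⟨insert i.succ (g.l.1.erase i.castSucc), hyc⟩, fun _ => 0⟩ :: l', ?_, ?_⟩
      · intro h hh
        rcases List.mem_cons.mp hh with rfl | hh
        · exact Or.inr (Or.inr (Or.inl ⟨⟨i, hi1, hi2, rfl⟩, rfl⟩))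
        · exact hgen' h hh
      · rw [listProd_cons _ hprod']
        simp only [mulBGen]
        rw [if_pos trivial]
        congr 1
        refine bgen_ext rfl rfl (funext fun c => ?_)
        simp only
        rw [texp_R hvy hi3]
        omega
    · -- L case
      have h0' : vwt g.r.1 c0 < vwt g.l.1 c0 := by omega
      obtain ⟨i, hi1, hi2, hi3⟩ := exists_L hcards h0'
      have hyc : (insert i.castSucc (g.l.1.erase i.succ)).card = k := by
        rw [card_move _ hi1 hi2, g.l.2]
      have hvy : ∀ c, vwt (⟨insert i.castSucc (g.l.1.erase i.succ), hyc⟩ : IdemState m k).1 c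
          + (if c = i then 1 else 0) = vwt g.l.1 c := vwt_L hi1 hi2
      have hwlt := wnum_L_lt hvy hi3
      obtain ⟨l', hgen', hprod'⟩ := ih
        ((∑ c : Fin m, wnum (⟨insert i.castSucc (g.l.1.erase i.succ), hyc⟩ : IdemState m k).1 g.r.1 c)
          + ∑ c : Fin m, g.s c)
        (by omega) ⟨⟨insert i.castSucc (g.l.1.erase i.succ), hyc⟩, g.r, g.s⟩ le_rfl
      refine ⟨⟨g.l, ⟨insert i.castSucc (g.l.1.erase i.succ), hyc⟩, fun _ => 0⟩ :: l', ?_, ?_⟩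
      · intro h hh
        rcases List.mem_cons.mp hh with rfl | hh
        · exact Or.inr (Or.inr (Or.inr ⟨⟨i, hi1, hi2, rfl⟩, rfl⟩))
        · exact hgen' h hh
      · rw [listProd_cons _ hprod']
        simp only [mulBGen]
        rw [if_pos trivial]
        congr 1
        refine bgen_ext rfl rfl (funext fun c => ?_)
        simp only
        rw [texp_L hvy hi3]
        omega
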